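/- arXiv:1710.09951 — 2 statements merged into one kernel-verified Lean document; each statement's English description precedes it below -/
import Mathlib

section
/- (Discrete Strassen's theorem for sub-distributions.) Let μ₁, μ₂ be sub-distributions over countable sets A₁, A₂ and R ⊆ A₁ × A₂ a relation. If there exists a coupling of (μ₁, μ₂) with support in R, then μ₁(S) ≤ μ₂(R(S)) for every S ⊆ A₁, where R(S) = {a₂ : ∃a₁ ∈ S, (a₁,a₂) ∈ R}. The converse holds if μ₁ and μ₂ have equal weight. -/
open scoped ENNReal

noncomputable section

/-- A discrete sub-distribution: total mass at most 1. -/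
def IsSubDist {A : Type*} (μ : A → ℝ≥0∞) : Prop := ∑' a, μ a ≤ 1

/-- Mass of a set under `μ`. -/
def setSum {A : Type*} (μ : A → ℝ≥0∞) (S : Set A) : ℝ≥0∞ := ∑' a : S, μ (a : A)

/-- `μ` is a coupling of `(μ₁, μ₂)`: a joint sub-distribution with the given marginals. -/
def IsCoupling {A₁ A₂ : Type*} (μ : A₁ × A₂ → ℝ≥0∞)
    (μ₁ : A₁ → ℝ≥0∞) (μ₂ : A₂ → ℝ≥0∞) : Prop :=
  IsSubDist μ ∧ (∀ a₁, ∑' a₂, μ (a₁, a₂) = μ₁ a₁) ∧ (∀ a₂, ∑' a₁, μ (a₁, a₂) = μ₂ a₂)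

/-- Image of a set under a relation. -/
def relImage {A₁ A₂ : Type*} (R : Set (A₁ × A₂)) (S : Set A₁) : Set A₂ :=
  {a₂ | ∃ a₁ ∈ S, (a₁, a₂) ∈ R}

/-- `R⋆ = R ∪ (A₁ × {⋆}) ∪ ({⋆} × A₂)`, with `⋆` modelled by `none`. -/
def starRel {A₁ A₂ : Type*} (R : Set (A₁ × A₂)) : Set (Option A₁ × Option A₂) :=
  {p | match p with
       | (some a₁, some a₂) => (a₁, a₂) ∈ R
       | (some _, none) => True
       | (none, some _) => True
       | (none, none) => False}

/-- `(ε, δ)`-approximate `R`-lifting of `(μ₁, μ₂)`, witnessed by two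
sub-distributions over `A₁⋆ × A₂⋆` with marginal, support, and ε-distance conditions. -/
def ApproxLift {A₁ A₂ : Type*} (ε δ : ℝ) (R : Set (A₁ × A₂))
    (μ₁ : A₁ → ℝ≥0∞) (μ₂ : A₂ → ℝ≥0∞) : Prop :=
  ∃ μL μR : Option A₁ × Option A₂ → ℝ≥0∞,
    IsSubDist μL ∧ IsSubDist μR ∧
    (∀ a₁, ∑' o, μL (some a₁, o) = μ₁ a₁) ∧ (∀ o, μL (none, o) = 0) ∧
    (∀ a₂, ∑' o, μR (o, some a₂) = μ₂ a₂) ∧ (∀ o, μR (o, none) = 0) ∧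
    {p | μL p ≠ 0} ⊆ starRel R ∧ {p | μR p ≠ 0} ⊆ starRel R ∧
    ∀ S : Set (Option A₁ × Option A₂),
      setSum μL S ≤ ENNReal.ofReal (Real.exp ε) * setSum μR S + ENNReal.ofReal δ

/-!
The finite case is a weighted Hall theorem, proved by induction on `#F + #G` as in the
Halmos–Vaughan proof of the marriage theorem. Move along an edge `(a₁, a₂)` of `R` the largest
mass that keeps Hall's condition. Afterwards either `a₁` or `a₂` has mass `0` and can be dropped,
or some nonempty proper `S ⊆ F` is tight, `μ₁(S) = μ₂(R(S))`, and the problem splits into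
`(S, R(S))` and `(F \ S, G \ R(S))`.

In general, a sink `⋆` linked to every point of `F` and carrying the mass of `μ₂`
outside `G` makes Hall's condition finite. This yields sub-couplings whose mass on `F × G` falls
short of the total mass by at most the tails outside `F` and `G`. The sub-couplings form a closed
subset of the compact space `A₁ × A₂ → ℝ≥0∞`, so these approximations have a common limit point;
it carries the whole mass, and equal total weights force both marginals to be exact.
-/

open scoped NNReal
open Finset

section FiniteHall

open Classical

variable {A₁ A₂ : Type*} (R : Set (A₁ × A₂))

def relImageIn (G : Finset A₂) (S : Finset A₁) : Finset A₂ := {b ∈ G | b ∈ relImage R S}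

variable {R}

@[simp]
lemma mem_relImageIn {G : Finset A₂} {S : Finset A₁} {b : A₂} :
    b ∈ relImageIn R G S ↔ b ∈ G ∧ ∃ a ∈ S, (a, b) ∈ R := by
  simp [relImageIn, relImage]

lemma relImageIn_subset (G : Finset A₂) (S : Finset A₁) : relImageIn R G S ⊆ G :=
  filter_subset _ _

lemma relImageIn_union (G : Finset A₂) (S S' : Finset A₁) :
    relImageIn R G (S ∪ S') = relImageIn R G S ∪ relImageIn R G S' := by
  ext b
  simp only [mem_relImageIn, mem_union]
  grind

lemma relImageIn_sdiff (G T : Finset A₂) (S : Finset A₁) :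
    relImageIn R (G \ T) S = relImageIn R G S \ T := by
  ext b
  simp only [mem_relImageIn, mem_sdiff]
  tauto

lemma relImageIn_relImageIn {G : Finset A₂} {S S' : Finset A₁} (h : S' ⊆ S) :
    relImageIn R (relImageIn R G S) S' = relImageIn R G S' := by
  ext b
  simp only [mem_relImageIn]
  grind

variable (R)

def HallCondition (F : Finset A₁) (G : Finset A₂) (μ₁ : A₁ → ℝ≥0) (μ₂ : A₂ → ℝ≥0) : Prop :=
  ∀ S ⊆ F, ∑ a ∈ S, μ₁ a ≤ ∑ b ∈ relImageIn R G S, μ₂ b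

def IsSaturatingPlan (F : Finset A₁) (G : Finset A₂) (μ₁ : A₁ → ℝ≥0) (μ₂ : A₂ → ℝ≥0)
    (ν : A₁ × A₂ → ℝ≥0) : Prop :=
  ν.support ⊆ R ∩ (F : Set A₁) ×ˢ (G : Set A₂) ∧ (∀ a ∈ F, ∑ b ∈ G, ν (a, b) = μ₁ a) ∧
    ∀ b ∈ G, ∑ a ∈ F, ν (a, b) ≤ μ₂ b

variable {R}

namespace IsSaturatingPlan

variable {F : Finset A₁} {G : Finset A₂} {μ₁ : A₁ → ℝ≥0} {μ₂ : A₂ → ℝ≥0} {ν : A₁ × A₂ → ℝ≥0}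

lemma apply_eq_zero (hν : IsSaturatingPlan R F G μ₁ μ₂ ν) {p : A₁ × A₂}
    (hp : p ∉ R ∩ (F : Set A₁) ×ˢ (G : Set A₂)) : ν p = 0 :=
  Function.notMem_support.1 fun h => hp (hν.1 h)

lemma apply_eq_zero_of_notMem_left (hν : IsSaturatingPlan R F G μ₁ μ₂ ν) {a : A₁} (ha : a ∉ F)
    (b : A₂) : ν (a, b) = 0 :=
  hν.apply_eq_zero fun h => ha h.2.1

lemma apply_eq_zero_of_notMem_right (hν : IsSaturatingPlan R F G μ₁ μ₂ ν) (a : A₁) {b : A₂}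
    (hb : b ∉ G) : ν (a, b) = 0 :=
  hν.apply_eq_zero fun h => hb h.2.2

lemma sum_le_left (hν : IsSaturatingPlan R F G μ₁ μ₂ ν) (a : A₁) :
    ∑ b ∈ G, ν (a, b) ≤ μ₁ a := by
  by_cases ha : a ∈ F
  · exact (hν.2.1 a ha).le
  · simp [hν.apply_eq_zero_of_notMem_left ha]

lemma sum_le_right (hν : IsSaturatingPlan R F G μ₁ μ₂ ν) (b : A₂) :
    ∑ a ∈ F, ν (a, b) ≤ μ₂ b := by
  by_cases hb : b ∈ G
  · exact hν.2.2 b hb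
  · simp [hν.apply_eq_zero_of_notMem_right _ hb]

lemma mono_left {F' : Finset A₁} (hν : IsSaturatingPlan R F' G μ₁ μ₂ ν) (hF : F' ⊆ F)
    (hμ₁ : ∀ a ∈ F, a ∉ F' → μ₁ a = 0) : IsSaturatingPlan R F G μ₁ μ₂ ν := by
  refine ⟨hν.1.trans fun p hp => ⟨hp.1, hF hp.2.1, hp.2.2⟩, fun a ha => ?_, fun b hb => ?_⟩
  · by_cases haF' : a ∈ F'
    · exact hν.2.1 a haF'
    · simp [hν.apply_eq_zero_of_notMem_left haF', hμ₁ a ha haF']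
  · rw [← sum_subset hF fun a _ ha => hν.apply_eq_zero_of_notMem_left ha b]
    exact hν.2.2 b hb

lemma mono_right {G' : Finset A₂} (hν : IsSaturatingPlan R F G' μ₁ μ₂ ν) (hG : G' ⊆ G) :
    IsSaturatingPlan R F G μ₁ μ₂ ν := by
  refine ⟨hν.1.trans fun p hp => ⟨hp.1, hp.2.1, hG hp.2.2⟩, fun a ha => ?_, fun b hb => ?_⟩
  · rw [← sum_subset hG fun b _ hb => hν.apply_eq_zero_of_notMem_right a hb]
    exact hν.2.1 a ha
  · by_cases hbG' : b ∈ G'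
    · exact hν.2.2 b hbG'
    · simp [hν.apply_eq_zero_of_notMem_right _ hbG']

lemma union {F' : Finset A₁} {G' : Finset A₂} {ν' : A₁ × A₂ → ℝ≥0}
    (hν : IsSaturatingPlan R F G μ₁ μ₂ ν) (hν' : IsSaturatingPlan R F' G' μ₁ μ₂ ν')
    (hF : Disjoint F F') (hG : Disjoint G G') :
    IsSaturatingPlan R (F ∪ F') (G ∪ G') μ₁ μ₂ (ν + ν') := by
  refine ⟨?_, fun a ha => ?_, fun b hb => ?_⟩
  · refine (Function.support_add _ _).trans (Set.union_subset ?_ ?_)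
    · exact hν.1.trans fun p hp => ⟨hp.1, by simp [hp.2.1], by simp [hp.2.2]⟩
    · exact hν'.1.trans fun p hp => ⟨hp.1, by simp [hp.2.1], by simp [hp.2.2]⟩
  · simp only [Pi.add_apply, sum_add_distrib, sum_union hG]
    rcases mem_union.1 ha with ha | ha
    · have ha' : a ∉ F' := disjoint_left.1 hF ha
      simp [hν.2.1 a ha, hν'.apply_eq_zero_of_notMem_left ha',
        sum_eq_zero fun b hb => hν.apply_eq_zero_of_notMem_right a (disjoint_right.1 hG hb)]
    · have ha' : a ∉ F := disjoint_right.1 hF ha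
      simp [hν'.2.1 a ha, hν.apply_eq_zero_of_notMem_left ha',
        sum_eq_zero fun b hb => hν'.apply_eq_zero_of_notMem_right a (disjoint_left.1 hG hb)]
  · simp only [Pi.add_apply, sum_add_distrib, sum_union hF]
    rcases mem_union.1 hb with hb | hb
    · have hb' : b ∉ G' := disjoint_left.1 hG hb
      simpa [hν'.apply_eq_zero_of_notMem_right _ hb',
        sum_eq_zero fun a ha => hν.apply_eq_zero_of_notMem_left (disjoint_right.1 hF ha) b]
        using hν.2.2 b hb
    · have hb' : b ∉ G := disjoint_right.1 hG hb
      simpa [hν.apply_eq_zero_of_notMem_right _ hb',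
        sum_eq_zero fun a ha => hν'.apply_eq_zero_of_notMem_left (disjoint_left.1 hF ha) b]
        using hν'.2.2 b hb

lemma add_single (hν : IsSaturatingPlan R F G μ₁ μ₂ ν) {a₁ : A₁} {a₂ : A₂} (hR : (a₁, a₂) ∈ R)
    (ha₁ : a₁ ∈ F) (ha₂ : a₂ ∈ G) (t : ℝ≥0) :
    IsSaturatingPlan R F G (μ₁ + Pi.single a₁ t) (μ₂ + Pi.single a₂ t)
      (ν + Pi.single (a₁, a₂) t) := by
  refine ⟨?_, fun a ha => ?_, fun b hb => ?_⟩
  · refine (Function.support_add _ _).trans (Set.union_subset hν.1 ?_)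
    refine (Pi.support_single_subset).trans ?_
    simpa using ⟨hR, ha₁, ha₂⟩
  · by_cases h : a = a₁
    · subst h; simp [sum_add_distrib, hν.2.1 a ha, Pi.single_apply, ha₂]
    · simp [hν.2.1 a ha, h]
  · by_cases h : b = a₂
    · subst h; simpa [sum_add_distrib, Pi.single_apply, ha₁] using hν.2.2 b hb
    · simpa [sum_add_distrib, h, Pi.single_apply] using hν.2.2 b hb

end IsSaturatingPlan

lemma tsub_single_add_single {α : Type*} {μ : α → ℝ≥0} {a : α} {t : ℝ≥0} (ht : t ≤ μ a) :
    μ - Pi.single a t + Pi.single a t = μ :=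
  tsub_add_cancel_of_le fun x => by
    by_cases hx : x = a
    · subst hx; simpa using ht
    · simp [hx]

lemma sum_tsub_single_add {α : Type*} (s : Finset α) {μ : α → ℝ≥0} {a : α} {t : ℝ≥0}
    (ht : t ≤ μ a) :
    ∑ x ∈ s, (μ - Pi.single a t : α → ℝ≥0) x + (if a ∈ s then t else 0) = ∑ x ∈ s, μ x := by
  rw [← sum_pi_single', ← sum_add_distrib]
  exact sum_congr rfl fun x _ => congrFun (tsub_single_add_single ht) x

namespace HallCondition

variable {F : Finset A₁} {G : Finset A₂} {μ₁ : A₁ → ℝ≥0} {μ₂ : A₂ → ℝ≥0}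

lemma mono_left (h : HallCondition R F G μ₁ μ₂) {F' : Finset A₁} (hF : F' ⊆ F) :
    HallCondition R F' G μ₁ μ₂ :=
  fun S hS => h S (hS.trans hF)

lemma erase_right (h : HallCondition R F G μ₁ μ₂) {b : A₂} (hb : μ₂ b = 0) :
    HallCondition R F (G.erase b) μ₁ μ₂ := by
  intro S hS
  have himage : relImageIn R (G.erase b) S = (relImageIn R G S).erase b := by
    ext; simp only [mem_relImageIn, mem_erase]; tauto
  rw [himage, sum_erase _ hb]
  exact h S hS

lemma restrict (h : HallCondition R F G μ₁ μ₂) {S : Finset A₁} (hS : S ⊆ F) :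
    HallCondition R S (relImageIn R G S) μ₁ μ₂ := by
  intro S' hS'
  rw [relImageIn_relImageIn hS']
  exact h S' (hS'.trans hS)

lemma sdiff_of_tight (h : HallCondition R F G μ₁ μ₂) {S : Finset A₁} (hS : S ⊆ F)
    (htight : ∑ a ∈ S, μ₁ a = ∑ b ∈ relImageIn R G S, μ₂ b) :
    HallCondition R (F \ S) (G \ relImageIn R G S) μ₁ μ₂ := by
  intro S' hS'
  have hunion := h (S ∪ S') (union_subset hS (hS'.trans sdiff_subset))
  rw [sum_union (disjoint_of_subset_right hS' disjoint_sdiff), relImageIn_union,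
    ← sum_sdiff (subset_union_left (s₂ := relImageIn R G S')), union_sdiff_left, htight,
    add_comm] at hunion
  rw [relImageIn_sdiff]
  exact le_of_add_le_add_right hunion

lemma tsub_single {a₁ : A₁} {a₂ : A₂} {t : ℝ≥0} (h : HallCondition R F G μ₁ μ₂)
    (hR : (a₁, a₂) ∈ R) (ha₂ : a₂ ∈ G) (ht₁ : t ≤ μ₁ a₁) (ht₂ : t ≤ μ₂ a₂)
    (hslack : ∀ S ⊆ F, a₁ ∉ S → a₂ ∈ relImageIn R G S →
      ∑ a ∈ S, μ₁ a + t ≤ ∑ b ∈ relImageIn R G S, μ₂ b) :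
    HallCondition R F G (μ₁ - Pi.single a₁ t) (μ₂ - Pi.single a₂ t) := by
  intro S hS
  have e₁ := sum_tsub_single_add S ht₁
  have e₂ := sum_tsub_single_add (relImageIn R G S) ht₂
  by_cases ha₁S : a₁ ∈ S
  · have ha₂S : a₂ ∈ relImageIn R G S := mem_relImageIn.2 ⟨ha₂, a₁, ha₁S, hR⟩
    rw [if_pos ha₁S] at e₁
    rw [if_pos ha₂S] at e₂
    exact le_of_add_le_add_right (e₁.trans_le ((h S hS).trans e₂.ge))
  · rw [if_neg ha₁S, add_zero] at e₁
    by_cases ha₂S : a₂ ∈ relImageIn R G S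
    · rw [if_pos ha₂S] at e₂
      exact le_of_add_le_add_right (e₁ ▸ (hslack S hS ha₁S ha₂S).trans e₂.ge)
    · rw [if_neg ha₂S, add_zero] at e₂
      exact e₁.trans_le ((h S hS).trans e₂.ge)

end HallCondition

lemma exists_greatest_le_forall_add_le {ι : Type*} (s : Finset ι) {x y : ι → ℝ≥0}
    (h : ∀ i ∈ s, x i ≤ y i) (u : ℝ≥0) :
    ∃ t ≤ u, (∀ i ∈ s, x i + t ≤ y i) ∧ (t = u ∨ ∃ i ∈ s, x i + t = y i) := by
  set V := insert u (s.image fun i => y i - x i)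
  have hV : V.Nonempty := insert_nonempty _ _
  refine ⟨V.min' hV, V.min'_le u (mem_insert_self _ _), fun i hi => ?_, ?_⟩
  · rw [← le_tsub_iff_left (h i hi)]
    exact V.min'_le _ (mem_insert_of_mem (mem_image_of_mem _ hi))
  · rcases mem_insert.1 (V.min'_mem hV) with hmin | hmin
    · exact Or.inl hmin
    · obtain ⟨i, hi, heq⟩ := mem_image.1 hmin
      exact Or.inr ⟨i, hi, by rw [← heq, add_tsub_cancel_of_le (h i hi)]⟩

section Steps

variable {F : Finset A₁} {G : Finset A₂} {μ₁ : A₁ → ℝ≥0} {μ₂ : A₂ → ℝ≥0}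

lemma exists_isSaturatingPlan_of_eq_zero_left
    (ih : ∀ F' G', #F' + #G' < #F + #G → HallCondition R F' G' μ₁ μ₂ →
      ∃ ν, IsSaturatingPlan R F' G' μ₁ μ₂ ν)
    (h : HallCondition R F G μ₁ μ₂) {a : A₁} (ha : a ∈ F) (h0 : μ₁ a = 0) :
    ∃ ν, IsSaturatingPlan R F G μ₁ μ₂ ν := by
  obtain ⟨ν, hν⟩ := ih (F.erase a) G (by have := card_erase_lt_of_mem ha; omega)
    (h.mono_left (erase_subset a F))
  refine ⟨ν, hν.mono_left (erase_subset a F) fun a' ha'F ha' => ?_⟩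
  obtain rfl : a' = a := by simpa [ha'F] using ha'
  exact h0

lemma exists_isSaturatingPlan_of_eq_zero_right
    (ih : ∀ F' G', #F' + #G' < #F + #G → HallCondition R F' G' μ₁ μ₂ →
      ∃ ν, IsSaturatingPlan R F' G' μ₁ μ₂ ν)
    (h : HallCondition R F G μ₁ μ₂) {b : A₂} (hb : b ∈ G) (h0 : μ₂ b = 0) :
    ∃ ν, IsSaturatingPlan R F G μ₁ μ₂ ν := by
  obtain ⟨ν, hν⟩ := ih F (G.erase b) (by have := card_erase_lt_of_mem hb; omega)
    (h.erase_right h0)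
  exact ⟨ν, hν.mono_right (erase_subset b G)⟩

lemma exists_isSaturatingPlan_of_tight
    (ih : ∀ F' G', #F' + #G' < #F + #G → HallCondition R F' G' μ₁ μ₂ →
      ∃ ν, IsSaturatingPlan R F' G' μ₁ μ₂ ν)
    (h : HallCondition R F G μ₁ μ₂) {S : Finset A₁} (hSF : S ⊆ F) (hS : S.Nonempty)
    (hSF' : S ≠ F) (htight : ∑ a ∈ S, μ₁ a = ∑ b ∈ relImageIn R G S, μ₂ b) :
    ∃ ν, IsSaturatingPlan R F G μ₁ μ₂ ν := by
  have hTG := relImageIn_subset (R := R) G S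
  obtain ⟨ν, hν⟩ := ih S (relImageIn R G S)
    (by have := card_lt_card (ssubset_of_subset_of_ne hSF hSF'); have := card_le_card hTG; omega)
    (h.restrict hSF)
  obtain ⟨ν', hν'⟩ := ih (F \ S) (G \ relImageIn R G S)
    (by
      have := card_lt_card (sdiff_ssubset hSF hS)
      have := card_le_card (G.sdiff_subset (t := relImageIn R G S))
      omega)
    (h.sdiff_of_tight hSF htight)
  have hplan := hν.union hν' disjoint_sdiff disjoint_sdiff
  rw [union_sdiff_of_subset hSF, union_sdiff_of_subset hTG] at hplan
  exact ⟨_, hplan⟩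

lemma exists_isSaturatingPlan_of_mem_rel
    (ih : ∀ F' G' μ₁' μ₂', #F' + #G' < #F + #G → HallCondition R F' G' μ₁' μ₂' →
      ∃ ν, IsSaturatingPlan R F' G' μ₁' μ₂' ν)
    (h : HallCondition R F G μ₁ μ₂) {a₁ : A₁} {a₂ : A₂} (ha₁ : a₁ ∈ F) (ha₂ : a₂ ∈ G)
    (hR : (a₁, a₂) ∈ R) : ∃ ν, IsSaturatingPlan R F G μ₁ μ₂ ν := by
  set 𝒮 := F.powerset.filter fun S => a₁ ∉ S ∧ a₂ ∈ relImageIn R G S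
  obtain ⟨t, ht, htS, hteq⟩ := exists_greatest_le_forall_add_le 𝒮
    (fun S hS => h S (mem_powerset.1 (mem_filter.1 hS).1)) (min (μ₁ a₁) (μ₂ a₂))
  have ht₁ : t ≤ μ₁ a₁ := ht.trans (min_le_left _ _)
  have ht₂ : t ≤ μ₂ a₂ := ht.trans (min_le_right _ _)
  have h' := h.tsub_single hR ha₂ ht₁ ht₂ fun S hSF ha₁S ha₂S =>
    htS S (mem_filter.2 ⟨mem_powerset.2 hSF, ha₁S, ha₂S⟩)
  obtain ⟨ν, hν⟩ : ∃ ν, IsSaturatingPlan R F G (μ₁ - Pi.single a₁ t) (μ₂ - Pi.single a₂ t) ν := by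
    rcases hteq with ht | ⟨S, hS, hStight⟩
    · rcases min_choice (μ₁ a₁) (μ₂ a₂) with hmin | hmin <;> rw [hmin] at ht
      · exact exists_isSaturatingPlan_of_eq_zero_left (ih · · _ _) h' ha₁ (by simp [ht])
      · exact exists_isSaturatingPlan_of_eq_zero_right (ih · · _ _) h' ha₂ (by simp [ht])
    · obtain ⟨hSF, ha₁S, ha₂S⟩ : S ⊆ F ∧ a₁ ∉ S ∧ a₂ ∈ relImageIn R G S := by
        simpa [𝒮] using hS
      obtain ⟨-, a, haS, -⟩ := mem_relImageIn.1 ha₂S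
      refine exists_isSaturatingPlan_of_tight (ih · · _ _) h' hSF ⟨a, haS⟩
        (fun hSF' => ha₁S (hSF' ▸ ha₁)) ?_
      rw [← sum_tsub_single_add S ht₁, ← sum_tsub_single_add _ ht₂, if_neg ha₁S, if_pos ha₂S,
        add_zero] at hStight
      exact add_right_cancel hStight
  exact ⟨_, tsub_single_add_single ht₁ ▸ tsub_single_add_single ht₂ ▸
    hν.add_single hR ha₁ ha₂ t⟩

end Steps

theorem HallCondition.exists_isSaturatingPlan {F : Finset A₁} {G : Finset A₂} {μ₁ : A₁ → ℝ≥0}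
    {μ₂ : A₂ → ℝ≥0} (h : HallCondition R F G μ₁ μ₂) : ∃ ν, IsSaturatingPlan R F G μ₁ μ₂ ν := by
  obtain ⟨n, hn⟩ : ∃ n, #F + #G = n := ⟨_, rfl⟩
  induction n using Nat.strong_induction_on generalizing F G μ₁ μ₂ with
  | _ n ih =>
  have ih' : ∀ F' G' μ₁' μ₂', #F' + #G' < #F + #G → HallCondition R F' G' μ₁' μ₂' →
      ∃ ν, IsSaturatingPlan R F' G' μ₁' μ₂' ν :=
    fun F' G' μ₁' μ₂' hlt h' => ih _ (hn ▸ hlt) h' rfl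
  rcases F.eq_empty_or_nonempty with rfl | ⟨a₁, ha₁⟩
  · exact ⟨0, by simp [IsSaturatingPlan]⟩
  rcases (relImageIn R G {a₁}).eq_empty_or_nonempty with hempty | ⟨a₂, ha₂⟩
  · refine exists_isSaturatingPlan_of_eq_zero_left (ih' · · μ₁ μ₂) h ha₁ ?_
    simpa [hempty] using h {a₁} (singleton_subset_iff.2 ha₁)
  · obtain ⟨ha₂G, a, ha, hR⟩ := mem_relImageIn.1 ha₂
    rw [mem_singleton.1 ha] at hR
    exact exists_isSaturatingPlan_of_mem_rel ih' h ha₁ ha₂G hR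

end FiniteHall

open Filter Topology

section SetSum

variable {A : Type*}

lemma setSum_finset (μ : A → ℝ≥0∞) (F : Finset A) : setSum μ F = ∑ a ∈ F, μ a :=
  F.tsum_subtype μ

lemma setSum_mono (μ : A → ℝ≥0∞) {S T : Set A} (h : S ⊆ T) : setSum μ S ≤ setSum μ T :=
  ENNReal.tsum_mono_subtype μ h

lemma setSum_union (μ : A → ℝ≥0∞) {S T : Set A} (h : Disjoint S T) :
    setSum μ (S ∪ T) = setSum μ S + setSum μ T :=
  ENNReal.summable.tsum_union_disjoint h ENNReal.summable

lemma sum_add_setSum_compl (μ : A → ℝ≥0∞) (F : Finset A) :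
    ∑ a ∈ F, μ a + setSum μ (↑F)ᶜ = ∑' a, μ a := by
  rw [← setSum_finset]
  exact ENNReal.summable.tsum_add_tsum_compl ENNReal.summable

lemma sum_add_setSum_compl_le_of_subset {f μ : A → ℝ≥0∞} (hf : ∀ a, f a ≤ μ a)
    {F F' : Finset A} (h : F ⊆ F') :
    ∑ a ∈ F', f a + setSum μ (↑F')ᶜ ≤ ∑ a ∈ F, f a + setSum μ (↑F)ᶜ := by
  classical
  have hcompl : (↑F : Set A)ᶜ = ↑(F' \ F) ∪ (↑F')ᶜ := by
    ext a; simp only [Set.mem_compl_iff, Finset.mem_coe, Set.mem_union, Finset.mem_sdiff]; tauto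
  have hdisj : Disjoint (↑(F' \ F) : Set A) (↑F')ᶜ :=
    Set.disjoint_compl_right_iff_subset.2 (by simp)
  rw [← Finset.sum_sdiff h, hcompl, setSum_union μ hdisj, setSum_finset]
  calc ∑ a ∈ F' \ F, f a + ∑ a ∈ F, f a + setSum μ (↑F')ᶜ
      ≤ ∑ a ∈ F' \ F, μ a + ∑ a ∈ F, f a + setSum μ (↑F')ᶜ := by gcongr with a; exact hf a
    _ = _ := by ring

lemma le_of_forall_le_add_setSum_compl {μ : A → ℝ≥0∞} (hμ : ∑' a, μ a ≠ ⊤) {x y : ℝ≥0∞}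
    (h : ∀ F : Finset A, x ≤ y + setSum μ (↑F)ᶜ) : x ≤ y := by
  have htail : Tendsto (fun F : Finset A => y + setSum μ (↑F)ᶜ) atTop (𝓝 (y + 0)) :=
    tendsto_const_nhds.add (ENNReal.tendsto_tsum_compl_atTop_zero hμ)
  simpa using ge_of_tendsto' htail h

end SetSum

lemma eq_of_le_of_tsum_le {α : Type*} {f g : α → ℝ≥0∞} (hfg : ∀ a, f a ≤ g a)
    (hg : ∑' a, g a ≠ ⊤) (h : ∑' a, g a ≤ ∑' a, f a) : f = g := by
  by_contra hne
  obtain ⟨a, ha⟩ := Function.ne_iff.1 hne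
  exact (ENNReal.tsum_lt_tsum (ne_top_of_le_ne_top hg (ENNReal.tsum_le_tsum hfg)) hfg
    ((hfg a).lt_of_ne ha)).not_ge h

section Strassen

variable {A₁ A₂ : Type*} {R : Set (A₁ × A₂)} {μ₁ : A₁ → ℝ≥0∞} {μ₂ : A₂ → ℝ≥0∞}

lemma IsCoupling.setSum_le_setSum_relImage {μ : A₁ × A₂ → ℝ≥0∞} (hμ : IsCoupling μ μ₁ μ₂)
    (hR : {p | μ p ≠ 0} ⊆ R) (S : Set A₁) : setSum μ₁ S ≤ setSum μ₂ (relImage R S) := by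
  have hcol : ∀ b, ∑' a : S, μ (a, b) ≤ (relImage R S).indicator μ₂ b := by
    intro b
    by_cases hb : b ∈ relImage R S
    · rw [Set.indicator_of_mem hb, ← hμ.2.2 b]
      exact ENNReal.tsum_comp_le_tsum_of_injective Subtype.coe_injective (fun a => μ (a, b))
    · rw [Set.indicator_of_notMem hb]
      exact (ENNReal.tsum_eq_zero.2 fun a : S => by_contra fun h => hb ⟨a, a.2, hR h⟩).le
  calc setSum μ₁ S = ∑' a : S, ∑' b, μ (a, b) := tsum_congr fun a => (hμ.2.1 a).symm
    _ = ∑' b, ∑' a : S, μ (a, b) := ENNReal.tsum_comm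
    _ ≤ ∑' b, (relImage R S).indicator μ₂ b := ENNReal.tsum_le_tsum hcol
    _ = setSum μ₂ (relImage R S) := (_root_.tsum_subtype _ _).symm

variable (R μ₁ μ₂) in
def subCouplings : Set (A₁ × A₂ → ℝ≥0∞) :=
  {ν | ν.support ⊆ R ∧ (∀ a, ∑' b, ν (a, b) ≤ μ₁ a) ∧ ∀ b, ∑' a, ν (a, b) ≤ μ₂ b}

lemma isClosed_subCouplings : IsClosed (subCouplings R μ₁ μ₂) := by
  have hsupp : {ν : A₁ × A₂ → ℝ≥0∞ | ν.support ⊆ R} = ⋂ p ∈ Rᶜ, {ν | ν p = 0} := by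
    ext ν
    simp only [Set.mem_ofPred_eq, Set.mem_iInter, Set.mem_compl_iff]
    exact ⟨fun h p hp => Function.notMem_support.1 (mt (@h p) hp),
      fun h p hp => by_contra fun hpR => hp (h p hpR)⟩
  simp only [subCouplings, Set.ofPred_and, Set.ofPred_forall]
  refine IsClosed.inter ?_ (IsClosed.inter (isClosed_iInter fun a => ?_)
    (isClosed_iInter fun b => ?_))
  · rw [hsupp]
    exact isClosed_biInter fun p _ => isClosed_eq (continuous_apply p) continuous_const
  · exact (lowerSemicontinuous_tsum fun b =>
      (continuous_apply (a, b)).lowerSemicontinuous).isClosed_preimage (μ₁ a)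
  · exact (lowerSemicontinuous_tsum fun a =>
      (continuous_apply (a, b)).lowerSemicontinuous).isClosed_preimage (μ₂ b)

-- `none` plays the sink `⋆`.
lemma hallCondition_insertNone (hμ₁ : ∀ a, μ₁ a ≠ ⊤) (hμ₂ : ∑' b, μ₂ b ≠ ⊤)
    (h : ∀ S, setSum μ₁ S ≤ setSum μ₂ (relImage R S)) (F : Finset A₁) (G : Finset A₂) :
    HallCondition {p : A₁ × Option A₂ | ∀ b ∈ p.2, (p.1, b) ∈ R} F (insertNone G)
      (fun a => (μ₁ a).toNNReal) (fun o => (o.elim (setSum μ₂ (↑G)ᶜ) μ₂).toNNReal) := by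
  intro S _
  rcases S.eq_empty_or_nonempty with rfl | ⟨a₀, ha₀⟩
  · simp
  have himage : relImageIn {p : A₁ × Option A₂ | ∀ b ∈ p.2, (p.1, b) ∈ R} (insertNone G) S =
      insertNone (relImageIn R G S) := by
    ext (_ | b)
    · simpa using ⟨a₀, ha₀⟩
    · simp
  have hG : setSum μ₂ (↑G)ᶜ ≠ ⊤ := ne_top_of_le_ne_top hμ₂
    (ENNReal.tsum_comp_le_tsum_of_injective Subtype.coe_injective μ₂)
  rw [himage, sum_insertNone, ← ENNReal.coe_le_coe]
  simp only [Option.elim_none, Option.elim_some]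
  push_cast [ENNReal.coe_toNNReal (hμ₁ _),
    ENNReal.coe_toNNReal (ENNReal.ne_top_of_tsum_ne_top hμ₂ _)]
  calc ∑ a ∈ S, μ₁ a = setSum μ₁ S := (setSum_finset μ₁ S).symm
    _ ≤ setSum μ₂ (relImage R S) := h S
    _ ≤ setSum μ₂ ((↑G)ᶜ ∪ ↑(relImageIn R G S)) := by
      refine setSum_mono μ₂ fun b hb => ?_
      by_cases hbG : b ∈ G
      · exact Or.inr (mem_relImageIn.2 ⟨hbG, hb⟩)
      · exact Or.inl hbG
    _ = _ := by
      rw [setSum_union μ₂ (Set.disjoint_compl_left_iff_subset.2 (relImageIn_subset G S)),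
        setSum_finset, ENNReal.coe_toNNReal hG]

lemma exists_mem_subCouplings_le (hμ₁ : ∀ a, μ₁ a ≠ ⊤) (hμ₂ : ∑' b, μ₂ b ≠ ⊤)
    (h : ∀ S, setSum μ₁ S ≤ setSum μ₂ (relImage R S)) (F : Finset A₁) (G : Finset A₂) :
    ∃ ν ∈ subCouplings R μ₁ μ₂,
      ∑ a ∈ F, μ₁ a ≤ ∑ a ∈ F, ∑ b ∈ G, ν (a, b) + setSum μ₂ (↑G)ᶜ := by
  obtain ⟨ν, hν⟩ := (hallCondition_insertNone hμ₁ hμ₂ h F G).exists_isSaturatingPlan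
  have hrow : ∀ a, (ν (a, none) : ℝ≥0∞) + ∑ b ∈ G, (ν (a, some b) : ℝ≥0∞) ≤ μ₁ a := fun a =>
    calc _ = ((∑ o ∈ insertNone G, ν (a, o) : ℝ≥0) : ℝ≥0∞) := by simp
      _ ≤ (μ₁ a).toNNReal := ENNReal.coe_le_coe.2 (hν.sum_le_left a)
      _ ≤ μ₁ a := ENNReal.coe_toNNReal_le_self
  refine ⟨fun p => ν (p.1, some p.2), ⟨fun p hp => ?_, fun a => ?_, fun b => ?_⟩, ?_⟩
  · exact (hν.1 (by simpa using hp)).1 p.2 rfl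
  · rw [tsum_eq_sum (s := G) fun b hb => by
      simp [hν.apply_eq_zero_of_notMem_right a (b := some b) (by simpa using hb)]]
    exact le_add_self.trans (hrow a)
  · rw [tsum_eq_sum (s := F) fun a ha => by simp [hν.apply_eq_zero_of_notMem_left ha]]
    calc ∑ a ∈ F, (ν (a, some b) : ℝ≥0∞) = ((∑ a ∈ F, ν (a, some b) : ℝ≥0) : ℝ≥0∞) := by simp
      _ ≤ (μ₂ b).toNNReal := ENNReal.coe_le_coe.2 (hν.sum_le_right (some b))
      _ ≤ μ₂ b := ENNReal.coe_toNNReal_le_self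
  · have hstar : ∑ a ∈ F, (ν (a, none) : ℝ≥0∞) ≤ setSum μ₂ (↑G)ᶜ :=
      calc _ = ((∑ a ∈ F, ν (a, none) : ℝ≥0) : ℝ≥0∞) := by simp
        _ ≤ (setSum μ₂ (↑G)ᶜ).toNNReal := ENNReal.coe_le_coe.2 (hν.sum_le_right none)
        _ ≤ setSum μ₂ (↑G)ᶜ := ENNReal.coe_toNNReal_le_self
    calc ∑ a ∈ F, μ₁ a
        = ∑ a ∈ F, ((ν (a, none) : ℝ≥0∞) + ∑ b ∈ G, (ν (a, some b) : ℝ≥0∞)) := by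
          refine sum_congr rfl fun a ha => ?_
          have hsum : ∑ o ∈ insertNone G, ν (a, o) = (μ₁ a).toNNReal := hν.2.1 a ha
          rw [← ENNReal.coe_toNNReal (hμ₁ a), ← hsum]
          simp
      _ ≤ _ := by rw [sum_add_distrib, add_comm]; gcongr

lemma sum_sum_add_setSum_compl_le_of_subset {ν : A₁ × A₂ → ℝ≥0∞}
    (hν : ν ∈ subCouplings R μ₁ μ₂) {F F' : Finset A₁} {G G' : Finset A₂} (hF : F ⊆ F')
    (hG : G ⊆ G') :
    ∑ a ∈ F', ∑ b ∈ G', ν (a, b) + setSum μ₁ (↑F')ᶜ + setSum μ₂ (↑G')ᶜ ≤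
      ∑ a ∈ F, ∑ b ∈ G, ν (a, b) + setSum μ₁ (↑F)ᶜ + setSum μ₂ (↑G)ᶜ :=
  calc _ ≤ ∑ a ∈ F, ∑ b ∈ G', ν (a, b) + setSum μ₁ (↑F)ᶜ + setSum μ₂ (↑G')ᶜ :=
        add_le_add (sum_add_setSum_compl_le_of_subset
          (fun a => (ENNReal.sum_le_tsum _).trans (hν.2.1 a)) hF) le_rfl
    _ = ∑ b ∈ G', ∑ a ∈ F, ν (a, b) + setSum μ₂ (↑G')ᶜ + setSum μ₁ (↑F)ᶜ := by
        rw [sum_comm]; ring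
    _ ≤ ∑ b ∈ G, ∑ a ∈ F, ν (a, b) + setSum μ₂ (↑G)ᶜ + setSum μ₁ (↑F)ᶜ :=
        add_le_add (sum_add_setSum_compl_le_of_subset
          (fun b => (ENNReal.sum_le_tsum _).trans (hν.2.2 b)) hG) le_rfl
    _ = _ := by rw [sum_comm]; ring

lemma isCoupling_of_forall_le (h₁ : IsSubDist μ₁) (hw : ∑' a, μ₁ a = ∑' b, μ₂ b)
    {ν : A₁ × A₂ → ℝ≥0∞} (hν : ν ∈ subCouplings R μ₁ μ₂)
    (hle : ∀ (F : Finset A₁) (G : Finset A₂),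
      ∑' a, μ₁ a ≤ ∑ a ∈ F, ∑ b ∈ G, ν (a, b) + setSum μ₁ (↑F)ᶜ + setSum μ₂ (↑G)ᶜ) :
    IsCoupling ν μ₁ μ₂ := by
  have hW : ∑' a, μ₁ a ≠ ⊤ := ne_top_of_le_ne_top ENNReal.one_ne_top h₁
  have hmass : ∑' a, μ₁ a ≤ ∑' p, ν p :=
    le_of_forall_le_add_setSum_compl (hw ▸ hW) fun G => le_of_forall_le_add_setSum_compl hW fun F =>
      calc _ ≤ _ := hle F G
        _ ≤ ∑' p, ν p + setSum μ₁ (↑F)ᶜ + setSum μ₂ (↑G)ᶜ := by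
          gcongr
          rw [← sum_product']
          exact ENNReal.sum_le_tsum _
        _ = _ := by ring
  have hrow : (fun a => ∑' b, ν (a, b)) = μ₁ :=
    eq_of_le_of_tsum_le hν.2.1 hW (by rwa [← ENNReal.tsum_prod'])
  have hcol : (fun b => ∑' a, ν (a, b)) = μ₂ :=
    eq_of_le_of_tsum_le hν.2.2 (hw ▸ hW)
      (by rwa [← hw, ← ENNReal.tsum_comm, ← ENNReal.tsum_prod'])
  refine ⟨?_, congrFun hrow, congrFun hcol⟩
  rw [IsSubDist, ENNReal.tsum_prod', hrow]
  exact h₁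

theorem exists_coupling_of_forall_setSum_le (h₁ : IsSubDist μ₁)
    (hw : ∑' a, μ₁ a = ∑' b, μ₂ b) (h : ∀ S, setSum μ₁ S ≤ setSum μ₂ (relImage R S)) :
    ∃ μ, IsCoupling μ μ₁ μ₂ ∧ {p | μ p ≠ 0} ⊆ R := by
  classical
  have hW : ∑' a, μ₁ a ≠ ⊤ := ne_top_of_le_ne_top ENNReal.one_ne_top h₁
  set Z : Finset A₁ × Finset A₂ → Set (A₁ × A₂ → ℝ≥0∞) := fun FG =>
    subCouplings R μ₁ μ₂ ∩ {ν | ∑' a, μ₁ a ≤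
      ∑ a ∈ FG.1, ∑ b ∈ FG.2, ν (a, b) + setSum μ₁ (↑FG.1)ᶜ + setSum μ₂ (↑FG.2)ᶜ}
  have hZclosed : ∀ FG, IsClosed (Z FG) := fun FG =>
    isClosed_subCouplings.inter (isClosed_le continuous_const (by fun_prop))
  have hZne : ∀ FG, (Z FG).Nonempty := fun ⟨F, G⟩ => by
    obtain ⟨ν, hν, hle⟩ :=
      exists_mem_subCouplings_le (ENNReal.ne_top_of_tsum_ne_top hW) (hw ▸ hW) h F G
    refine ⟨ν, hν, ?_⟩
    change ∑' a, μ₁ a ≤ ∑ a ∈ F, ∑ b ∈ G, ν (a, b) + setSum μ₁ (↑F)ᶜ + setSum μ₂ (↑G)ᶜ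
    rw [← sum_add_setSum_compl μ₁ F, add_right_comm]
    gcongr
  have hZanti : Antitone Z := fun ⟨F, G⟩ ⟨F', G'⟩ ⟨hF, hG⟩ ν ⟨hν, hle⟩ =>
    ⟨hν, hle.trans (sum_sum_add_setSum_compl_le_of_subset hν hF hG)⟩
  obtain ⟨ν, hν⟩ := IsCompact.nonempty_iInter_of_directed_nonempty_isCompact_isClosed Z
    hZanti.directed_ge hZne (fun FG => (hZclosed FG).isCompact) hZclosed
  rw [Set.mem_iInter] at hν
  exact ⟨ν, isCoupling_of_forall_le h₁ hw (hν (∅, ∅)).1 fun F G => (hν (F, G)).2,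
    (hν (∅, ∅)).1.1⟩

end Strassen

theorem discrete_strassen_general {A₁ A₂ : Type*}
    (μ₁ : A₁ → ℝ≥0∞) (μ₂ : A₂ → ℝ≥0∞) (R : Set (A₁ × A₂))
    (h₁ : IsSubDist μ₁) :
    ((∃ μ : A₁ × A₂ → ℝ≥0∞, IsCoupling μ μ₁ μ₂ ∧ {p | μ p ≠ 0} ⊆ R) →
      ∀ S : Set A₁, setSum μ₁ S ≤ setSum μ₂ (relImage R S)) ∧
    ((∑' a, μ₁ a = ∑' a, μ₂ a) →
      (∀ S : Set A₁, setSum μ₁ S ≤ setSum μ₂ (relImage R S)) →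
      ∃ μ : A₁ × A₂ → ℝ≥0∞, IsCoupling μ μ₁ μ₂ ∧ {p | μ p ≠ 0} ⊆ R) :=
  ⟨fun ⟨_, hμ, hR⟩ => hμ.setSum_le_setSum_relImage hR, exists_coupling_of_forall_setSum_le h₁⟩

theorem discrete_strassen {A₁ A₂ : Type*} [Countable A₁] [Countable A₂]
    (μ₁ : A₁ → ℝ≥0∞) (μ₂ : A₂ → ℝ≥0∞) (R : Set (A₁ × A₂))
    (h₁ : IsSubDist μ₁) (h₂ : IsSubDist μ₂) :
    ((∃ μ : A₁ × A₂ → ℝ≥0∞, IsCoupling μ μ₁ μ₂ ∧ {p | μ p ≠ 0} ⊆ R) →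
      ∀ S : Set A₁, setSum μ₁ S ≤ setSum μ₂ (relImage R S)) ∧
    ((∑' a, μ₁ a = ∑' a, μ₂ a) →
      (∀ S : Set A₁, setSum μ₁ S ≤ setSum μ₂ (relImage R S)) →
      ∃ μ : A₁ × A₂ → ℝ≥0∞, IsCoupling μ μ₁ μ₂ ∧ {p | μ p ≠ 0} ⊆ R) :=
  discrete_strassen_general μ₁ μ₂ R h₁
end
end

section
/- (Pointwise equality.) Let μ₁, μ₂ be sub-distributions over a countable set R. Suppose for every i ∈ R there exists an (ε, δᵢ)-approximate lifting of {(r₁,r₂) : r₁ = i → r₂ = i} relating μ₁ and μ₂, with δᵢ ≥ 0 and ∑_{i∈R} δᵢ = δ < ∞. Then there exists an (ε, δ)-approximate lifting of the equality relation relating μ₁ and μ₂. -/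
open scoped ENNReal

noncomputable section

/-!
A lifting of the one-point implication relation `r₁ = i → r₂ = i`, tested on the event
"the first component is `i`", gives `μ₁ i ≤ e^ε μ₂ i + δᵢ`: on that event the right witness
can only charge `(i, i)`. Conversely, such pointwise bounds give a lifting of equality: the left
witness puts `min (μ₁ i) (e^ε μ₂ i)` at `(i, i)` and the excess `μ₁ i - e^ε μ₂ i ≤ δᵢ` at
`(i, ⋆)`, the right witness puts `μ₂ i` at `(i, i)`, and the excesses have total mass at most
`∑ δᵢ`.
-/

section SetSum

variable {A : Type*}

lemma setSum_le_tsum (μ : A → ℝ≥0∞) (S : Set A) : setSum μ S ≤ ∑' a, μ a :=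
  ENNReal.tsum_comp_le_tsum_of_injective Subtype.val_injective μ

lemma setSum_le_mul_add {μ ν κ : A → ℝ≥0∞} (c : ℝ≥0∞) (h : ∀ a, μ a ≤ c * ν a + κ a)
    (S : Set A) : setSum μ S ≤ c * setSum ν S + setSum κ S := by
  calc setSum μ S ≤ ∑' a : S, (c * ν a + κ a) := ENNReal.tsum_le_tsum fun a => h a
    _ = c * setSum ν S + setSum κ S := by rw [ENNReal.tsum_add, ENNReal.tsum_mul_left]; rfl

lemma setSum_range_prodMk {B : Type*} (μ : A × B → ℝ≥0∞) (a : A) :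
    setSum μ (Set.range (Prod.mk a)) = ∑' b, μ (a, b) :=
  tsum_range μ (Prod.mk_right_injective a)

end SetSum

theorem ApproxLift.le_of_imp {R : Type*} {μ₁ μ₂ : R → ℝ≥0∞} {ε δ : ℝ} {i : R}
    (h : ApproxLift ε δ {p : R × R | p.1 = i → p.2 = i} μ₁ μ₂) :
    μ₁ i ≤ ENNReal.ofReal (Real.exp ε) * μ₂ i + ENNReal.ofReal δ := by
  obtain ⟨μL, μR, -, -, hL, -, hR, hR_none, -, hR_supp, hdist⟩ := h
  have hR_row : ∑' o, μR (some i, o) = μR (some i, some i) := by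
    refine tsum_eq_single (some i) ?_
    rintro (_ | j) hj
    · exact hR_none _
    · by_contra hne
      exact hj (congrArg some (hR_supp hne rfl))
  have hR_le : μR (some i, some i) ≤ μ₂ i :=
    hR i ▸ ENNReal.le_tsum (f := fun o => μR (o, some i)) (some i)
  have := hdist (Set.range (Prod.mk (some i)))
  rw [setSum_range_prodMk, setSum_range_prodMk, hL, hR_row] at this
  exact this.trans (by gcongr)

section Witnesses

variable {R : Type*}

open Classical in
def diagMass (f : R → ℝ≥0∞) : Option R × Option R → ℝ≥0∞
  | (some i, some j) => if i = j then f i else 0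
  | _ => 0

def leftStarMass (f : R → ℝ≥0∞) : Option R × Option R → ℝ≥0∞
  | (some i, none) => f i
  | _ => 0

variable (f : R → ℝ≥0∞)

lemma tsum_diagMass_some_left (i : R) : ∑' o, diagMass f (some i, o) = f i := by
  rw [tsum_eq_single (some i)]
  · simp [diagMass]
  · rintro (_ | j) hj
    · rfl
    · exact if_neg fun h => hj (congrArg some h.symm)

lemma tsum_diagMass_some_right (j : R) : ∑' o, diagMass f (o, some j) = f j := by
  rw [tsum_eq_single (some j)]
  · simp [diagMass]
  · rintro (_ | i) hi
    · rfl
    · exact if_neg fun h => hi (congrArg some h)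

lemma diagMass_none_right (o : Option R) : diagMass f (o, none) = 0 := by
  cases o <;> rfl

lemma tsum_diagMass : ∑' p, diagMass f p = ∑' i, f i := by
  have hsupp : Function.support (diagMass f) ⊆ Set.range fun i => (some i, some i) := by
    rintro ⟨_ | i, _ | j⟩ hp
    all_goals simp only [Function.mem_support, diagMass, ne_eq, ite_eq_right_iff,
      Classical.not_imp, not_true_eq_false] at hp
    obtain ⟨rfl, -⟩ := hp
    exact ⟨i, rfl⟩
  have hinj : Function.Injective fun i : R => (some i, some i) := fun i j h => by simpa using h
  rw [← hinj.tsum_eq hsupp]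
  simp [diagMass]

lemma diagMass_ne_zero {p : Option R × Option R} (hp : diagMass f p ≠ 0) :
    p ∈ starRel {q : R × R | q.1 = q.2} := by
  rcases p with ⟨_ | i, _ | j⟩
  · exact absurd rfl hp
  · trivial
  · trivial
  · by_contra hij
    exact hp (if_neg hij)

lemma tsum_leftStarMass_some_left (i : R) : ∑' o, leftStarMass f (some i, o) = f i := by
  rw [tsum_eq_single none]
  · rfl
  · rintro (_ | j) hj
    · exact absurd rfl hj
    · rfl

lemma tsum_leftStarMass : ∑' p, leftStarMass f p = ∑' i, f i := by
  have hsupp : Function.support (leftStarMass f) ⊆ Set.range fun i => (some i, none) := by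
    rintro ⟨_ | i, _ | j⟩ hp
    all_goals first | exact absurd rfl hp | exact ⟨i, rfl⟩
  have hinj : Function.Injective fun i : R => ((some i, none) : Option R × Option R) :=
    fun i j h => by simpa using h
  rw [← hinj.tsum_eq hsupp]
  rfl

lemma leftStarMass_ne_zero (S : Set (R × R)) {p : Option R × Option R}
    (hp : leftStarMass f p ≠ 0) : p ∈ starRel S := by
  rcases p with ⟨_ | i, _ | j⟩
  all_goals first | exact absurd rfl hp | trivial

end Witnesses

theorem approxLift_eq_of_le {R : Type*} {μ₁ μ₂ : R → ℝ≥0∞} (h₁ : IsSubDist μ₁)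
    (h₂ : IsSubDist μ₂) {ε δ : ℝ} (d : R → ℝ≥0∞) (hd : ∑' i, d i ≤ ENNReal.ofReal δ)
    (hle : ∀ i, μ₁ i ≤ ENNReal.ofReal (Real.exp ε) * μ₂ i + d i) :
    ApproxLift ε δ {p : R × R | p.1 = p.2} μ₁ μ₂ := by
  set c := ENNReal.ofReal (Real.exp ε)
  let excess : R → ℝ≥0∞ := fun i => μ₁ i - c * μ₂ i
  let common : R → ℝ≥0∞ := fun i => min (μ₁ i) (c * μ₂ i)
  have hsplit : ∀ i, excess i + common i = μ₁ i := fun i => tsub_add_min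
  refine ⟨leftStarMass excess + diagMass common, diagMass μ₂, ?_, ?_, fun i => ?_,
    fun _ => by simp [leftStarMass, diagMass], tsum_diagMass_some_right μ₂,
    diagMass_none_right μ₂, fun p hp => ?_,
    fun _ => diagMass_ne_zero μ₂, fun S => ?_⟩
  · simpa only [IsSubDist, Pi.add_apply, ENNReal.tsum_add, tsum_leftStarMass, tsum_diagMass,
      ← hsplit] using h₁
  · rwa [IsSubDist, tsum_diagMass]
  · simp only [Pi.add_apply, ENNReal.tsum_add, tsum_leftStarMass_some_left,
      tsum_diagMass_some_left, hsplit]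
  · rcases eq_or_ne (leftStarMass excess p) 0 with h | h
    · exact diagMass_ne_zero common (by simpa [h] using hp)
    · exact leftStarMass_ne_zero excess _ h
  · have hpt : ∀ p, (leftStarMass excess + diagMass common) p
        ≤ c * diagMass μ₂ p + leftStarMass d p := by
      rintro ⟨_ | i, _ | j⟩
      · simp [leftStarMass, diagMass]
      · simp [leftStarMass, diagMass]
      · simpa [leftStarMass, diagMass, excess, add_comm] using hle i
      · simp only [Pi.add_apply, leftStarMass, diagMass]
        split_ifs <;> simp [common]
    calc _ ≤ c * setSum (diagMass μ₂) S + setSum (leftStarMass d) S := setSum_le_mul_add c hpt S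
      _ ≤ c * setSum (diagMass μ₂) S + ENNReal.ofReal δ := by
        gcongr
        exact (setSum_le_tsum _ S).trans ((tsum_leftStarMass d).trans_le hd)

theorem pointwise_equality_general {R : Type*}
    (μ₁ μ₂ : R → ℝ≥0∞) (h₁ : IsSubDist μ₁) (h₂ : IsSubDist μ₂)
    (ε : ℝ) (δf : R → ℝ) (hδ : ∀ i, 0 ≤ δf i) (hs : Summable δf)
    (h : ∀ i : R, ApproxLift ε (δf i) {p : R × R | p.1 = i → p.2 = i} μ₁ μ₂) :
    ApproxLift ε (∑' i, δf i) {p : R × R | p.1 = p.2} μ₁ μ₂ :=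
  approxLift_eq_of_le h₁ h₂ (fun i => ENNReal.ofReal (δf i))
    (ENNReal.ofReal_tsum_of_nonneg hδ hs).ge fun i => (h i).le_of_imp

theorem pointwise_equality {R : Type*} [Countable R]
    (μ₁ μ₂ : R → ℝ≥0∞) (h₁ : IsSubDist μ₁) (h₂ : IsSubDist μ₂)
    (ε : ℝ) (δf : R → ℝ) (hδ : ∀ i, 0 ≤ δf i) (hs : Summable δf)
    (h : ∀ i : R, ApproxLift ε (δf i) {p : R × R | p.1 = i → p.2 = i} μ₁ μ₂) :
    ApproxLift ε (∑' i, δf i) {p : R × R | p.1 = p.2} μ₁ μ₂ :=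
  pointwise_equality_general μ₁ μ₂ h₁ h₂ ε δf hδ hs h
end
end
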